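/- arXiv:2602.19310 — 3 statements merged into one kernel-verified Lean document; each statement's English description precedes it below -/
import Mathlib

section
/- Let (z¹, π¹) and (z², π²) be two solutions of the mixed linear complementarity problem MLCP(M, N, q, r), and suppose M is positive semidefinite in the sense that xᵀMx ≥ 0 for all x ∈ ℝⁿ (M need not be symmetric). Then (z¹ − z²)ᵀ M (z¹ − z²) = 0. -/
open Matrix

/-- A pair `(z, π)` is a solution of the mixed linear complementarity problem
`MLCP(M, N, q, r)`. -/
def IsMLCPSolution {n m : ℕ} (M : Matrix (Fin n) (Fin n) ℝ)
    (N : Matrix (Fin n) (Fin m) ℝ) (q : Fin n → ℝ) (r : Fin m → ℝ)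
    (z : Fin n → ℝ) (π : Fin m → ℝ) : Prop :=
  0 ≤ z ∧ 0 ≤ M.mulVec z + N.mulVec π + q ∧
    z ⬝ᵥ (M.mulVec z + N.mulVec π + q) = 0 ∧ N.transpose.mulVec z = r

/-- If `M` is positive semidefinite (in the sense `xᵀ M x ≥ 0` for all `x`, `M`
not necessarily symmetric) and `(z¹, π¹)`, `(z², π²)` are two solutions of
`MLCP(M, N, q, r)`, then `(z¹ − z²)ᵀ M (z¹ − z²) = 0`. -/
theorem mlcp_quadratic_form_diff_eq_zero {n m : ℕ} (M : Matrix (Fin n) (Fin n) ℝ)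
    (N : Matrix (Fin n) (Fin m) ℝ) (q : Fin n → ℝ) (r : Fin m → ℝ)
    (hM : ∀ x : Fin n → ℝ, 0 ≤ x ⬝ᵥ M.mulVec x)
    (z₁ z₂ : Fin n → ℝ) (π₁ π₂ : Fin m → ℝ)
    (h₁ : IsMLCPSolution M N q r z₁ π₁) (h₂ : IsMLCPSolution M N q r z₂ π₂) :
    (z₁ - z₂) ⬝ᵥ M.mulVec (z₁ - z₂) = 0 := by
  obtain ⟨hz₁, hw₁, hc₁, hr₁⟩ := h₁
  obtain ⟨hz₂, hw₂, hc₂, hr₂⟩ := h₂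
  set w₁ := M.mulVec z₁ + N.mulVec π₁ + q with hwdef₁
  set w₂ := M.mulVec z₂ + N.mulVec π₂ + q with hwdef₂
  have hdot12 : 0 ≤ z₁ ⬝ᵥ w₂ := by
    apply Finset.sum_nonneg
    intro i _
    exact mul_nonneg (hz₁ i) (hw₂ i)
  have hdot21 : 0 ≤ z₂ ⬝ᵥ w₁ := by
    apply Finset.sum_nonneg
    intro i _
    exact mul_nonneg (hz₂ i) (hw₁ i)
  have hN : (z₁ - z₂) ⬝ᵥ N.mulVec (π₁ - π₂) = 0 := by
    rw [dotProduct_mulVec, ← Matrix.transpose_transpose N, ← Matrix.mulVec_transpose,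
      Matrix.transpose_transpose, Matrix.mulVec_sub, hr₁, hr₂, sub_self, zero_dotProduct]
  have key : (z₁ - z₂) ⬝ᵥ M.mulVec (z₁ - z₂) = (z₁ - z₂) ⬝ᵥ (w₁ - w₂) := by
    have : w₁ - w₂ = M.mulVec (z₁ - z₂) + N.mulVec (π₁ - π₂) := by
      rw [hwdef₁, hwdef₂, Matrix.mulVec_sub, Matrix.mulVec_sub]
      abel
    rw [this, dotProduct_add, hN, add_zero]
  have hle : (z₁ - z₂) ⬝ᵥ (w₁ - w₂) ≤ 0 := by
    have : (z₁ - z₂) ⬝ᵥ (w₁ - w₂)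
        = z₁ ⬝ᵥ w₁ - z₁ ⬝ᵥ w₂ - z₂ ⬝ᵥ w₁ + z₂ ⬝ᵥ w₂ := by
      rw [sub_dotProduct, dotProduct_sub, dotProduct_sub]
      ring
    rw [this, hc₁, hc₂]
    linarith
  have hge := hM (z₁ - z₂)
  linarith [key ▸ hge, key ▸ hle]
end

section
/- Let M ∈ ℝ^{n×n}, and let M_s := (M + Mᵀ)/2 denote its symmetric part. Suppose M_s is positive semidefinite. If (z¹, π¹) and (z², π²) are two solutions of the mixed linear complementarity problem MLCP(M, N, q, r), then M_s z¹ = M_s z². -/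
/-
Put `d := z¹ - z²` and `wⁱ := M zⁱ + N πⁱ + q`. Since `Nᵀ d = r - r = 0`, the `N`-terms drop out of
`dᵀ (w¹ - w²) = dᵀ M d`, while complementarity and nonnegativity give
`dᵀ (w¹ - w²) = -(z¹ᵀ w² + z²ᵀ w¹) ≤ 0`. Hence `dᵀ M_s d = dᵀ M d ≤ 0`, and a positive semidefinite
symmetric matrix annihilates every vector on which its quadratic form vanishes: `M_s d = 0`.
-/

open Matrix

section DotProduct

variable {ι κ R : Type*} [Fintype ι]

theorem sub_dotProduct_sub_nonpos_of_dotProduct_eq_zero [CommRing R] [PartialOrder R]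
    [IsOrderedRing R] {z₁ z₂ w₁ w₂ : ι → R} (hz₁ : 0 ≤ z₁) (hz₂ : 0 ≤ z₂) (hw₁ : 0 ≤ w₁)
    (hw₂ : 0 ≤ w₂) (hc₁ : z₁ ⬝ᵥ w₁ = 0) (hc₂ : z₂ ⬝ᵥ w₂ = 0) :
    (z₁ - z₂) ⬝ᵥ (w₁ - w₂) ≤ 0 := by
  rw [sub_dotProduct, dotProduct_sub, dotProduct_sub, hc₁, hc₂, zero_sub, sub_zero, ← neg_add',
    neg_nonpos]
  exact add_nonneg (dotProduct_nonneg_of_nonneg hz₁ hw₂) (dotProduct_nonneg_of_nonneg hz₂ hw₁)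

theorem dotProduct_mulVec_eq_zero_of_transpose_mulVec_eq_zero [Fintype κ] [CommSemiring R]
    {N : Matrix ι κ R} {d : ι → R} (hd : Nᵀ *ᵥ d = 0) (π : κ → R) : d ⬝ᵥ N *ᵥ π = 0 := by
  rw [dotProduct_mulVec, ← mulVec_transpose, hd, zero_dotProduct]

theorem dotProduct_transpose_mulVec_self [CommSemiring R] (M : Matrix ι ι R) (x : ι → R) :
    x ⬝ᵥ Mᵀ *ᵥ x = x ⬝ᵥ M *ᵥ x := by
  rw [mulVec_transpose, dotProduct_mulVec, dotProduct_comm]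

theorem dotProduct_half_add_transpose_mulVec_self [Field R] [NeZero (2 : R)]
    (M : Matrix ι ι R) (x : ι → R) :
    x ⬝ᵥ ((2 : R)⁻¹ • (M + Mᵀ)) *ᵥ x = x ⬝ᵥ M *ᵥ x := by
  rw [smul_mulVec, dotProduct_smul, add_mulVec, dotProduct_add,
    dotProduct_transpose_mulVec_self, smul_eq_mul, ← two_mul, inv_mul_cancel_left₀ two_ne_zero]

end DotProduct

theorem Matrix.IsSymm.mulVec_eq_zero_of_dotProduct_mulVec_self_nonpos {ι : Type*} [Fintype ι]
    {S : Matrix ι ι ℝ} (hS : S.IsSymm) (hpsd : ∀ x, 0 ≤ x ⬝ᵥ S *ᵥ x) {x : ι → ℝ}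
    (hx : x ⬝ᵥ S *ᵥ x ≤ 0) : S *ᵥ x = 0 := by
  have hS' : S.PosSemidef :=
    .of_dotProduct_mulVec_nonneg (isHermitian_iff_isSymm.mpr hS) fun y => by
      simpa only [star_trivial] using hpsd y
  rw [← hS'.dotProduct_mulVec_zero_iff, star_trivial]
  exact le_antisymm hx (hpsd x)

theorem IsMLCPSolution.sub_dotProduct_mulVec_sub_nonpos {n m : ℕ} {M : Matrix (Fin n) (Fin n) ℝ}
    {N : Matrix (Fin n) (Fin m) ℝ} {q : Fin n → ℝ} {r : Fin m → ℝ} {z₁ z₂ : Fin n → ℝ}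
    {π₁ π₂ : Fin m → ℝ} (h₁ : IsMLCPSolution M N q r z₁ π₁)
    (h₂ : IsMLCPSolution M N q r z₂ π₂) :
    (z₁ - z₂) ⬝ᵥ M *ᵥ (z₁ - z₂) ≤ 0 := by
  obtain ⟨hz₁, hw₁, hc₁, hN₁⟩ := h₁
  obtain ⟨hz₂, hw₂, hc₂, hN₂⟩ := h₂
  have hNd : Nᵀ *ᵥ (z₁ - z₂) = 0 := by rw [mulVec_sub, hN₁, hN₂, sub_self]
  have hw_sub : (M *ᵥ z₁ + N *ᵥ π₁ + q) - (M *ᵥ z₂ + N *ᵥ π₂ + q) =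
      M *ᵥ (z₁ - z₂) + (N *ᵥ π₁ - N *ᵥ π₂) := by
    rw [mulVec_sub]; abel
  calc (z₁ - z₂) ⬝ᵥ M *ᵥ (z₁ - z₂)
      = (z₁ - z₂) ⬝ᵥ ((M *ᵥ z₁ + N *ᵥ π₁ + q) - (M *ᵥ z₂ + N *ᵥ π₂ + q)) := by
        rw [hw_sub, dotProduct_add, dotProduct_sub,
          dotProduct_mulVec_eq_zero_of_transpose_mulVec_eq_zero hNd,
          dotProduct_mulVec_eq_zero_of_transpose_mulVec_eq_zero hNd, sub_self, add_zero]
    _ ≤ 0 := sub_dotProduct_sub_nonpos_of_dotProduct_eq_zero hz₁ hz₂ hw₁ hw₂ hc₁ hc₂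

/-- If the symmetric part `M_s := (M + Mᵀ)/2` of `M` is positive semidefinite,
then any two solutions `(z¹, π¹)` and `(z², π²)` of `MLCP(M, N, q, r)` satisfy
`M_s z¹ = M_s z²`. -/
theorem mlcp_symmetric_part_mulVec_unique {n m : ℕ} (M : Matrix (Fin n) (Fin n) ℝ)
    (N : Matrix (Fin n) (Fin m) ℝ) (q : Fin n → ℝ) (r : Fin m → ℝ)
    (Ms : Matrix (Fin n) (Fin n) ℝ) (hMs : Ms = (2 : ℝ)⁻¹ • (M + M.transpose))
    (hpsd : ∀ x : Fin n → ℝ, 0 ≤ x ⬝ᵥ Ms.mulVec x)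
    (z₁ z₂ : Fin n → ℝ) (π₁ π₂ : Fin m → ℝ)
    (h₁ : IsMLCPSolution M N q r z₁ π₁) (h₂ : IsMLCPSolution M N q r z₂ π₂) :
    Ms.mulVec z₁ = Ms.mulVec z₂ := by
  have hsymm : Ms.IsSymm := hMs ▸ (isSymm_add_transpose_self M).smul _
  have hform : (z₁ - z₂) ⬝ᵥ Ms *ᵥ (z₁ - z₂) ≤ 0 := by
    rw [hMs, dotProduct_half_add_transpose_mulVec_self]
    exact h₁.sub_dotProduct_mulVec_sub_nonpos h₂
  have hker := hsymm.mulVec_eq_zero_of_dotProduct_mulVec_self_nonpos hpsd hform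
  rwa [mulVec_sub, sub_eq_zero] at hker
end

section
/- Fix finite sets I (buses), K (transmission lines), B (batches), a subset I^κ ⊆ I of buses hosting the hyperscaler, and for each bus j a finite set H_j of generators at j. Let G_{jh} ≥ 0, F_k ≥ 0 be capacities, PTDF ∈ ℝ^{K×I}, and q_b ≥ 0 batch loads with Q := Σ_{b∈B} q_b. Define Λ*(G,F) as the optimal value of the linear program: maximize Σ_{j∈I} Σ_{h∈H_j} Σ_{i∈I^κ} g_{jhi} over g ≥ 0 and free y, subject to Σ_{i∈I^κ} g_{jhi} ≤ G_{jh} for all j, h; y_i = Σ_{h∈H_i} Σ_{j∈I} g_{ihj} − Σ_{j∈I} Σ_{h∈H_j} g_{jhi} for all i ∈ I; Σ_{i∈I} y_i = 0; and −F_k ≤ Σ_{i∈I} PTDF_{ki} y_i ≤ F_k for all k ∈ K. Define the set F of feasible workload allocations as the set of triples (ℓ, g, y) with ℓ ≥ 0, g ≥ 0, y free, satisfying: g_{jhi} = Σ_{b∈B} ℓ_{bjhi} for all j ∈ I, h ∈ H_j, i ∈ I^κ; Σ_{i∈I^κ} g_{jhi} ≤ G_{jh} for all j, h; y_i = Σ_{h∈H_i}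 Σ_{j∈I} g_{ihj} − Σ_{j∈I} Σ_{h∈H_j} g_{jhi} for all i ∈ I; Σ_{i∈I} y_i = 0; −F_k ≤ Σ_{i∈I} PTDF_{ki} y_i ≤ F_k for all k ∈ K; and Σ_{j∈I} Σ_{h∈H_j} Σ_{i∈I^κ} ℓ_{bjhi} = q_b for all b ∈ B. Then F is nonempty if and only if Q ≤ Λ*(G,F). -/
open Finset

/-- Feasibility of the batch-load allocation set `F` is equivalent to
`Q ≤ Λ*(G, F)`, where `Λ*(G, F)` is the optimal value of the linear program
maximizing total delivery to hyperscaler buses subject to generation capacity,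
nodal balance, system balance, and transmission (PTDF) limits. -/
theorem batch_feasibility_iff_le_LP_value
    {I K B : Type*} [Fintype I] [DecidableEq I] [Fintype K] [Fintype B]
    (Iκ : Finset I)
    (H : I → Type*) [∀ j, Fintype (H j)]
    (G : ∀ j : I, H j → ℝ) (hG : ∀ j h, 0 ≤ G j h)
    (F : K → ℝ) (hF : ∀ k, 0 ≤ F k)
    (PTDF : K → I → ℝ)
    (q : B → ℝ) (hq : ∀ b, 0 ≤ q b) :
    (∃ (ℓ : B → ∀ j : I, H j → I → ℝ) (g : ∀ j : I, H j → I → ℝ) (y : I → ℝ),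
        (∀ b j h i, 0 ≤ ℓ b j h i) ∧
        (∀ j h i, 0 ≤ g j h i) ∧
        (∀ b j h i, i ∉ Iκ → ℓ b j h i = 0) ∧
        (∀ j h i, i ∉ Iκ → g j h i = 0) ∧
        (∀ j h, ∀ i ∈ Iκ, g j h i = ∑ b, ℓ b j h i) ∧
        (∀ j h, ∑ i ∈ Iκ, g j h i ≤ G j h) ∧
        (∀ i, y i = (∑ j, ∑ h : H i, g i h j) - (∑ j, ∑ h : H j, g j h i)) ∧
        (∑ i, y i = 0) ∧
        (∀ k, -F k ≤ ∑ i, PTDF k i * y i) ∧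
        (∀ k, ∑ i, PTDF k i * y i ≤ F k) ∧
        (∀ b, ∑ j, ∑ h : H j, ∑ i ∈ Iκ, ℓ b j h i = q b))
    ↔ (∑ b, q b) ≤
        sSup {v : ℝ | ∃ (g : ∀ j : I, H j → I → ℝ) (y : I → ℝ),
          (∀ j h i, 0 ≤ g j h i) ∧
          (∀ j h i, i ∉ Iκ → g j h i = 0) ∧
          (∀ j h, ∑ i ∈ Iκ, g j h i ≤ G j h) ∧
          (∀ i, y i = (∑ j, ∑ h : H i, g i h j) - (∑ j, ∑ h : H j, g j h i)) ∧
          (∑ i, y i = 0) ∧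
          (∀ k, -F k ≤ ∑ i, PTDF k i * y i) ∧
          (∀ k, ∑ i, PTDF k i * y i ≤ F k) ∧
          v = ∑ j, ∑ h : H j, ∑ i ∈ Iκ, g j h i} := by
  classical
  set S : Set ℝ := {v : ℝ | ∃ (g : ∀ j : I, H j → I → ℝ) (y : I → ℝ),
          (∀ j h i, 0 ≤ g j h i) ∧
          (∀ j h i, i ∉ Iκ → g j h i = 0) ∧
          (∀ j h, ∑ i ∈ Iκ, g j h i ≤ G j h) ∧
          (∀ i, y i = (∑ j, ∑ h : H i, g i h j) - (∑ j, ∑ h : H j, g j h i)) ∧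
          (∑ i, y i = 0) ∧
          (∀ k, -F k ≤ ∑ i, PTDF k i * y i) ∧
          (∀ k, ∑ i, PTDF k i * y i ≤ F k) ∧
          v = ∑ j, ∑ h : H j, ∑ i ∈ Iκ, g j h i} with hSdef
  have hbdd : BddAbove S := by
    refine ⟨∑ j, ∑ h : H j, G j h, ?_⟩
    rintro v ⟨g, y, hg0, -, hcap, -, -, -, -, rfl⟩
    exact Finset.sum_le_sum fun j _ => Finset.sum_le_sum fun h _ => hcap j h
  have h0S : (0 : ℝ) ∈ S := by
    refine ⟨0, 0, ?_, ?_, ?_, ?_, ?_, ?_, ?_, ?_⟩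
    · intro j h i; exact le_refl 0
    · intro j h i _; rfl
    · intro j h; simpa using hG j h
    · intro i; simp
    · simp
    · intro k; simpa using neg_nonpos.mpr (hF k)
    · intro k; simpa using hF k
    · simp
  constructor
  · rintro ⟨ℓ, g, y, hℓ0, hg0, hℓz, hgz, hgl, hcap, hy, hysum, hF1, hF2, hq'⟩
    have hmem : (∑ b, q b) ∈ S := by
      refine ⟨g, y, hg0, hgz, hcap, hy, hysum, hF1, hF2, ?_⟩
      have step : ∀ j (h : H j), ∑ i ∈ Iκ, g j h i = ∑ b, ∑ i ∈ Iκ, ℓ b j h i := by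
        intro j h
        rw [Finset.sum_comm]
        exact Finset.sum_congr rfl fun i hi => hgl j h i hi
      calc ∑ b, q b = ∑ b, ∑ j, ∑ h : H j, ∑ i ∈ Iκ, ℓ b j h i :=
            Finset.sum_congr rfl fun b _ => (hq' b).symm
        _ = ∑ j, ∑ b, ∑ h : H j, ∑ i ∈ Iκ, ℓ b j h i := Finset.sum_comm
        _ = ∑ j, ∑ h : H j, ∑ b, ∑ i ∈ Iκ, ℓ b j h i :=
            Finset.sum_congr rfl fun j _ => Finset.sum_comm
        _ = ∑ j, ∑ h : H j, ∑ i ∈ Iκ, g j h i :=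
            Finset.sum_congr rfl fun j _ => Finset.sum_congr rfl fun h _ => (step j h).symm
    exact le_csSup hbdd hmem
  · intro hle
    -- the set of feasible `g`'s
    set yb : (∀ j : I, H j → I → ℝ) → I → ℝ :=
      fun g i => (∑ j, ∑ h : H i, g i h j) - (∑ j, ∑ h : H j, g j h i) with hyb
    set val : (∀ j : I, H j → I → ℝ) → ℝ :=
      fun g => ∑ j, ∑ h : H j, ∑ i ∈ Iκ, g j h i with hval
    set C : Set (∀ j : I, H j → I → ℝ) :=
      {g | (∀ j h i, 0 ≤ g j h i) ∧ (∀ j h i, i ∉ Iκ → g j h i = 0) ∧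
        (∀ j h, ∑ i ∈ Iκ, g j h i ≤ G j h) ∧ (∑ i, yb g i = 0) ∧
        (∀ k, -F k ≤ ∑ i, PTDF k i * yb g i) ∧
        (∀ k, ∑ i, PTDF k i * yb g i ≤ F k)} with hC
    have hSimg : S = val '' C := by
      ext v
      constructor
      · rintro ⟨g, y, hg0, hgz, hcap, hy, hysum, hF1, hF2, rfl⟩
        have hyy : y = yb g := funext hy
        exact ⟨g, ⟨hg0, hgz, hcap, hyy ▸ hysum, fun k => hyy ▸ hF1 k,
          fun k => hyy ▸ hF2 k⟩, rfl⟩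
      · rintro ⟨g, ⟨hg0, hgz, hcap, hysum, hF1, hF2⟩, rfl⟩
        exact ⟨g, yb g, hg0, hgz, hcap, fun i => rfl, hysum, hF1, hF2, rfl⟩
    have conteval : ∀ (j : I) (h : H j) (i : I),
        Continuous fun g : ∀ j : I, H j → I → ℝ => g j h i := by
      intro j h i
      exact (continuous_apply i).comp ((continuous_apply h).comp (continuous_apply j))
    have contyb : ∀ i : I, Continuous fun g => yb g i := by
      intro i
      refine Continuous.sub ?_ ?_
      · exact continuous_finset_sum _ fun j _ => continuous_finset_sum _ fun h _ => conteval i h j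
      · exact continuous_finset_sum _ fun j _ => continuous_finset_sum _ fun h _ => conteval j h i
    have contval : Continuous val :=
      continuous_finset_sum _ fun j _ => continuous_finset_sum _ fun h _ =>
        continuous_finset_sum _ fun i _ => conteval j h i
    have hCclosed : IsClosed C := by
      have e1 : IsClosed {g : ∀ j : I, H j → I → ℝ | ∀ j h i, 0 ≤ g j h i} := by
        have : {g : ∀ j : I, H j → I → ℝ | ∀ j h i, 0 ≤ g j h i} =
            ⋂ j, ⋂ h, ⋂ i, {g | 0 ≤ g j h i} := by
          ext g; simp [Set.mem_iInter]
        rw [this]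
        exact isClosed_iInter fun j => isClosed_iInter fun h => isClosed_iInter fun i =>
          isClosed_le continuous_const (conteval j h i)
      have e2 : IsClosed {g : ∀ j : I, H j → I → ℝ | ∀ j h i, i ∉ Iκ → g j h i = 0} := by
        have : {g : ∀ j : I, H j → I → ℝ | ∀ j h i, i ∉ Iκ → g j h i = 0} =
            ⋂ j, ⋂ h, ⋂ i, {g | i ∉ Iκ → g j h i = 0} := by
          ext g; simp [Set.mem_iInter]
        rw [this]
        refine isClosed_iInter fun j => isClosed_iInter fun h => isClosed_iInter fun i => ?_
        by_cases hi : i ∈ Iκ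
        · have : {g : ∀ j : I, H j → I → ℝ | i ∉ Iκ → g j h i = 0} = Set.univ := by
            ext g; simp [hi]
          rw [this]; exact isClosed_univ
        · have : {g : ∀ j : I, H j → I → ℝ | i ∉ Iκ → g j h i = 0} = {g | g j h i = 0} := by
            ext g; simp [hi]
          rw [this]
          exact isClosed_eq (conteval j h i) continuous_const
      have e3 : IsClosed {g : ∀ j : I, H j → I → ℝ | ∀ j h, ∑ i ∈ Iκ, g j h i ≤ G j h} := by
        have : {g : ∀ j : I, H j → I → ℝ | ∀ j h, ∑ i ∈ Iκ, g j h i ≤ G j h} =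
            ⋂ j, ⋂ h, {g | ∑ i ∈ Iκ, g j h i ≤ G j h} := by
          ext g; simp [Set.mem_iInter]
        rw [this]
        exact isClosed_iInter fun j => isClosed_iInter fun h =>
          isClosed_le (continuous_finset_sum _ fun i _ => conteval j h i) continuous_const
      have e4 : IsClosed {g : ∀ j : I, H j → I → ℝ | ∑ i, yb g i = 0} :=
        isClosed_eq (continuous_finset_sum _ fun i _ => contyb i) continuous_const
      have e5 : IsClosed {g : ∀ j : I, H j → I → ℝ | ∀ k, -F k ≤ ∑ i, PTDF k i * yb g i} := by
        have : {g : ∀ j : I, H j → I → ℝ | ∀ k, -F k ≤ ∑ i, PTDF k i * yb g i} =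
            ⋂ k, {g | -F k ≤ ∑ i, PTDF k i * yb g i} := by
          ext g; simp [Set.mem_iInter]
        rw [this]
        exact isClosed_iInter fun k => isClosed_le continuous_const
          (continuous_finset_sum _ fun i _ => continuous_const.mul (contyb i))
      have e6 : IsClosed {g : ∀ j : I, H j → I → ℝ | ∀ k, ∑ i, PTDF k i * yb g i ≤ F k} := by
        have : {g : ∀ j : I, H j → I → ℝ | ∀ k, ∑ i, PTDF k i * yb g i ≤ F k} =
            ⋂ k, {g | ∑ i, PTDF k i * yb g i ≤ F k} := by
          ext g; simp [Set.mem_iInter]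
        rw [this]
        exact isClosed_iInter fun k => isClosed_le
          (continuous_finset_sum _ fun i _ => continuous_const.mul (contyb i)) continuous_const
      have : C = {g : ∀ j : I, H j → I → ℝ | ∀ j h i, 0 ≤ g j h i} ∩
          ({g | ∀ j h i, i ∉ Iκ → g j h i = 0} ∩
          ({g | ∀ j h, ∑ i ∈ Iκ, g j h i ≤ G j h} ∩
          ({g | ∑ i, yb g i = 0} ∩
          ({g | ∀ k, -F k ≤ ∑ i, PTDF k i * yb g i} ∩
          {g | ∀ k, ∑ i, PTDF k i * yb g i ≤ F k})))) := by
        ext g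
        simp only [hC, Set.mem_setOf_eq, Set.mem_inter_iff]
      rw [this]
      exact e1.inter (e2.inter (e3.inter (e4.inter (e5.inter e6))))
    have hK : IsCompact (Set.pi Set.univ fun j : I => Set.pi Set.univ fun h : H j =>
        Set.pi Set.univ fun _ : I => Set.Icc (0 : ℝ) (G j h)) :=
      isCompact_univ_pi fun j => isCompact_univ_pi fun h => isCompact_univ_pi fun _ =>
        isCompact_Icc
    have hsub : C ⊆ Set.pi Set.univ fun j : I => Set.pi Set.univ fun h : H j =>
        Set.pi Set.univ fun _ : I => Set.Icc (0 : ℝ) (G j h) := by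
      rintro g ⟨hg0, hgz, hcap, -⟩
      rw [Set.mem_univ_pi]; intro j
      rw [Set.mem_univ_pi]; intro h
      rw [Set.mem_univ_pi]; intro i
      refine ⟨hg0 j h i, ?_⟩
      by_cases hi : i ∈ Iκ
      · calc g j h i ≤ ∑ i' ∈ Iκ, g j h i' :=
              Finset.single_le_sum (fun i' _ => hg0 j h i') hi
          _ ≤ G j h := hcap j h
      · rw [hgz j h i hi]; exact hG j h
    have hCcomp : IsCompact C := hK.of_isClosed_subset hCclosed hsub
    have hScomp : IsCompact S := by rw [hSimg]; exact hCcomp.image contval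
    have hsup : sSup S ∈ S := hScomp.sSup_mem ⟨0, h0S⟩
    obtain ⟨g, y, hg0, hgz, hcap, hy, hysum, hF1, hF2, hvalM⟩ := hsup
    by_cases hQ0 : ∑ b, q b = 0
    · have hq0 : ∀ b, q b = 0 := fun b =>
        (Finset.sum_eq_zero_iff_of_nonneg fun b _ => hq b).mp hQ0 b (Finset.mem_univ b)
      refine ⟨0, 0, 0, ?_, ?_, ?_, ?_, ?_, ?_, ?_, ?_, ?_, ?_, ?_⟩
      · intro b j h i; exact le_refl 0
      · intro j h i; exact le_refl 0
      · intro b j h i _; rfl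
      · intro j h i _; rfl
      · intro j h i _; simp
      · intro j h; simpa using hG j h
      · intro i; simp
      · simp
      · intro k; simpa using neg_nonpos.mpr (hF k)
      · intro k; simpa using hF k
      · intro b; simpa using (hq0 b).symm
    · have hQpos : 0 < ∑ b, q b := lt_of_le_of_ne (Finset.sum_nonneg fun b _ => hq b)
        (Ne.symm hQ0)
      have hMpos : 0 < sSup S := lt_of_lt_of_le hQpos hle
      have hMne : sSup S ≠ 0 := ne_of_gt hMpos
      set t : ℝ := (∑ b, q b) / sSup S with htdef
      have ht0 : 0 ≤ t := div_nonneg hQpos.le hMpos.le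
      have ht1 : t ≤ 1 := (div_le_one hMpos).mpr hle
      refine ⟨fun b j h i => (q b / sSup S) * g j h i,
        fun j h i => t * g j h i, fun i => t * y i,
        ?_, ?_, ?_, ?_, ?_, ?_, ?_, ?_, ?_, ?_, ?_⟩
      · intro b j h i
        exact mul_nonneg (div_nonneg (hq b) hMpos.le) (hg0 j h i)
      · intro j h i
        exact mul_nonneg ht0 (hg0 j h i)
      · intro b j h i hi; simp only [hgz j h i hi, mul_zero]
      · intro j h i hi; simp only [hgz j h i hi, mul_zero]
      · intro j h i _
        rw [← Finset.sum_mul, ← Finset.sum_div]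
      · intro j h
        rw [← Finset.mul_sum]
        have hs0 : 0 ≤ ∑ i ∈ Iκ, g j h i := Finset.sum_nonneg fun i _ => hg0 j h i
        calc t * ∑ i ∈ Iκ, g j h i ≤ 1 * ∑ i ∈ Iκ, g j h i :=
              mul_le_mul_of_nonneg_right ht1 hs0
          _ = ∑ i ∈ Iκ, g j h i := one_mul _
          _ ≤ G j h := hcap j h
      · intro i
        show t * y i = (∑ j, ∑ h : H i, t * g i h j) - ∑ j, ∑ h : H j, t * g j h i
        rw [hy i, mul_sub]
        simp only [Finset.mul_sum]
      · rw [← Finset.mul_sum, hysum, mul_zero]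
      · intro k
        have hs : |∑ i, PTDF k i * y i| ≤ F k := abs_le.mpr ⟨hF1 k, hF2 k⟩
        have heq : ∑ i, PTDF k i * (t * y i) = t * ∑ i, PTDF k i * y i := by
          rw [Finset.mul_sum]
          exact Finset.sum_congr rfl fun i _ => by ring
        have habs : |t * ∑ i, PTDF k i * y i| ≤ F k := by
          rw [abs_mul, abs_of_nonneg ht0]
          calc t * |∑ i, PTDF k i * y i| ≤ 1 * |∑ i, PTDF k i * y i| :=
                mul_le_mul_of_nonneg_right ht1 (abs_nonneg _)
            _ = |∑ i, PTDF k i * y i| := one_mul _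
            _ ≤ F k := hs
        rw [heq]
        exact (abs_le.mp habs).1
      · intro k
        have hs : |∑ i, PTDF k i * y i| ≤ F k := abs_le.mpr ⟨hF1 k, hF2 k⟩
        have heq : ∑ i, PTDF k i * (t * y i) = t * ∑ i, PTDF k i * y i := by
          rw [Finset.mul_sum]
          exact Finset.sum_congr rfl fun i _ => by ring
        have habs : |t * ∑ i, PTDF k i * y i| ≤ F k := by
          rw [abs_mul, abs_of_nonneg ht0]
          calc t * |∑ i, PTDF k i * y i| ≤ 1 * |∑ i, PTDF k i * y i| :=
                mul_le_mul_of_nonneg_right ht1 (abs_nonneg _)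
            _ = |∑ i, PTDF k i * y i| := one_mul _
            _ ≤ F k := hs
        rw [heq]
        exact (abs_le.mp habs).2
      · intro b
        simp only [← Finset.mul_sum]
        rw [← hvalM]
        exact div_mul_cancel₀ (q b) hMne
end
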